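/- arXiv:2006.06551 — 3 statements merged into one kernel-verified Lean document; each statement's English description precedes it below -/
import Mathlib

section
/- Let G be a finite connected simple graph and let D ⊆ V(G) be a set of vertices such that the induced subgraph G[D] is connected and every vertex in V(G) \ D has at least two neighbors in D. Then the rainbow connection number of G is at most |D| + 1. -/
open SimpleGraph

/-- A coloring `c` of the (potential) edges of `G` makes `G` rainbow-connected if every pair of
vertices is joined by a path whose edges all receive pairwise distinct colors. -/
def IsRainbowConnected {V : Type*} {n : ℕ} (G : SimpleGraph V) (c : Sym2 V → Fin n) : Prop :=
  ∀ u v : V, ∃ p : G.Walk u v, p.IsPath ∧ (p.edges.map c).Nodup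

/-!
Fix a root `r ∈ D` and give every `w ∈ D \ {r}` a parent: a neighbour in `G[D]` strictly closer
to `r`. Coloring each edge by its endpoint farther from `r` colors the parent edge of `w` by `w`,
so the colors are injective on parent edges and never equal `r`; any path in the tree of parent
edges is therefore rainbow and avoids color `r`. A vertex `v ∉ D` sends one edge into `D` of color
`r` and another of a fresh color. A path from `u` to `v` that leaves `u ∉ D` by its `r`-edge,
runs through the tree, and enters `v ∉ D` by its fresh-colored edge is then rainbow, using the
`|D| + 1` colors `D ∪ {fresh}`.
-/

namespace SimpleGraph

variable {V W α β : Type*}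

namespace Walk

variable {G : SimpleGraph V} {u v w : V}

def IsRainbow (c : Sym2 V → α) (p : G.Walk u v) : Prop :=
  (p.edges.map c).Nodup

theorem isRainbow_cons_iff {c : Sym2 V → α} (h : G.Adj u v) (p : G.Walk v w) :
    (cons h p).IsRainbow c ↔ c s(u, v) ∉ p.edges.map c ∧ p.IsRainbow c := by
  simp only [IsRainbow, edges_cons, List.map_cons, List.nodup_cons]

theorem isRainbow_concat_iff {c : Sym2 V → α} (p : G.Walk u v) (h : G.Adj v w) :
    (p.concat h).IsRainbow c ↔ p.IsRainbow c ∧ c s(v, w) ∉ p.edges.map c := by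
  rw [IsRainbow, IsRainbow, edges_concat, List.map_concat, List.nodup_concat, and_comm]

theorem IsRainbow.comp {c : Sym2 V → α} {f : α → β} {p : G.Walk u v} (hp : p.IsRainbow c)
    (hf : f.Injective) : p.IsRainbow (f ∘ c) := by
  simpa only [IsRainbow, ← List.map_map] using hp.map hf

end Walk

variable {H : SimpleGraph W}

theorem Connected.exists_adj_dist_lt (hH : H.Connected) {w r : W} (hw : w ≠ r) :
    ∃ x, H.Adj w x ∧ H.dist x r < H.dist w r := by
  obtain ⟨p, hp⟩ := hH.exists_walk_length_eq_dist w r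
  cases p with
  | nil => exact absurd rfl hw
  | cons h q =>
    refine ⟨_, h, ?_⟩
    have := dist_le q
    rw [Walk.length_cons] at hp
    omega

/-- Ties, which never occur on the parent edges used below, are sent to `r`. -/
noncomputable def fartherEndpoint (H : SimpleGraph W) (r : W) : Sym2 W → W :=
  Sym2.lift ⟨fun x y ↦ if H.dist y r < H.dist x r then x else if H.dist x r < H.dist y r then y
    else r, fun x y ↦ by dsimp only; split_ifs <;> first | rfl | omega⟩

theorem fartherEndpoint_mk_of_dist_lt {r w x : W} (h : H.dist x r < H.dist w r) :
    H.fartherEndpoint r s(w, x) = w := by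
  simp [fartherEndpoint, h]

theorem Connected.exists_isPath_isRainbow_fartherEndpoint (hH : H.Connected) (r x y : W) :
    ∃ p : H.Walk x y, p.IsPath ∧ p.IsRainbow (H.fartherEndpoint r) ∧
      r ∉ p.edges.map (H.fartherEndpoint r) := by
  classical
  choose par hadj hlt using fun w (hw : w ≠ r) ↦ hH.exists_adj_dist_lt hw
  let parentEdges : Set (Sym2 W) := {e | ∃ w hw, e = s(w, par w hw)}
  have toRoot (w : W) : ∃ p : H.Walk w r, ∀ e ∈ p.edges, e ∈ parentEdges := by
    induction hd : H.dist w r using Nat.strong_induction_on generalizing w with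
    | _ n ih =>
      by_cases hw : w = r
      · subst hw
        exact ⟨.nil, by simp⟩
      obtain ⟨p, hp⟩ := ih _ (hd ▸ hlt w hw) (par w hw) rfl
      refine ⟨.cons (hadj w hw) p, ?_⟩
      simpa only [Walk.edges_cons, List.forall_mem_cons] using ⟨⟨w, hw, rfl⟩, hp⟩
  have hcolor {w : W} (hw : w ≠ r) : H.fartherEndpoint r s(w, par w hw) = w :=
    fartherEndpoint_mk_of_dist_lt (hlt w hw)
  obtain ⟨px, hx⟩ := toRoot x
  obtain ⟨py, hy⟩ := toRoot y
  let q := (px.append py.reverse).toPath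
  have hq (e : Sym2 W) (he : e ∈ q.1.edges) : e ∈ parentEdges := by
    have := Walk.edges_toPath_subset_edges _ he
    rw [Walk.edges_append, Walk.edges_reverse, List.mem_append, List.mem_reverse] at this
    exact this.elim (hx e) (hy e)
  refine ⟨q.1, q.2, q.2.isTrail.edges_nodup.map_on fun e he e' he' hee' ↦ ?_, fun hr ↦ ?_⟩
  · obtain ⟨w, hw, rfl⟩ := hq e he
    obtain ⟨w', hw', rfl⟩ := hq e' he'
    rw [hcolor hw, hcolor hw'] at hee'
    subst hee'
    rfl
  · obtain ⟨e, he, hre⟩ := List.mem_map.1 hr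
    obtain ⟨w, hw, rfl⟩ := hq e he
    exact hw ((hcolor hw).symm.trans hre)

variable {G : SimpleGraph V}

theorem Connected.exists_isPath_isRainbow_of_induce {D : Set V} (hD : (G.induce D).Connected)
    (r : D) : ∃ c : Sym2 V → D, ∀ x ∈ D, ∀ y ∈ D, ∃ p : G.Walk x y, p.IsPath ∧
      (∀ z ∈ p.support, z ∈ D) ∧ p.IsRainbow c ∧ r ∉ p.edges.map c := by
  classical
  let retract (x : V) : D := if h : x ∈ D then ⟨x, h⟩ else r
  let c := (G.induce D).fartherEndpoint r ∘ Sym2.map retract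
  have hc : c ∘ Sym2.map Subtype.val = (G.induce D).fartherEndpoint r := by
    funext e
    induction e with
    | h x y => simp [c, retract]
  refine ⟨c, fun x hx y hy ↦ ?_⟩
  obtain ⟨p, hp, hrainbow, hr⟩ := hD.exists_isPath_isRainbow_fartherEndpoint r ⟨x, hx⟩ ⟨y, hy⟩
  let q : G.Walk x y := p.map (Embedding.induce D).toHom
  have hcolors : q.edges.map c = p.edges.map ((G.induce D).fartherEndpoint r) := by
    rw [show q.edges = _ from Walk.edges_map _ p, List.map_map]
    exact congrArg (List.map · p.edges) hc
  refine ⟨q, hp.map Subtype.val_injective, ?_, ?_, ?_⟩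
  · rintro _ hz
    obtain ⟨z, -, rfl⟩ := List.mem_map.1 ((Walk.support_map _ p) ▸ hz)
    exact z.2
  · rwa [Walk.IsRainbow, hcolors]
  · rwa [hcolors]

theorem exists_isPath_isRainbow_of_two_colored_adj {D : Set V} {c : Sym2 V → α} {a b : α}
    (hab : a ≠ b)
    (hin : ∀ x ∈ D, ∀ y ∈ D, ∃ p : G.Walk x y, p.IsPath ∧ (∀ z ∈ p.support, z ∈ D) ∧
      p.IsRainbow c ∧ a ∉ p.edges.map c ∧ b ∉ p.edges.map c)
    (hout : ∀ v ∉ D, ∃ d₁ ∈ D, ∃ d₂ ∈ D, G.Adj v d₁ ∧ G.Adj v d₂ ∧ c s(v, d₁) = a ∧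
      c s(v, d₂) = b)
    (u v : V) : ∃ p : G.Walk u v, p.IsPath ∧ p.IsRainbow c := by
  have fromD (x : V) (hx : x ∈ D) (y : V) : ∃ p : G.Walk x y, p.IsPath ∧
      (∀ z ∈ p.support, z ∈ D ∨ z = y) ∧ p.IsRainbow c ∧ a ∉ p.edges.map c := by
    by_cases hy : y ∈ D
    · obtain ⟨p, hp, hsupp, hrb, ha, -⟩ := hin x hx y hy
      exact ⟨p, hp, fun z hz ↦ .inl (hsupp z hz), hrb, ha⟩
    obtain ⟨-, -, d, hd, -, hadj, -, hcd⟩ := hout y hy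
    rw [Sym2.eq_swap] at hcd
    obtain ⟨p, hp, hsupp, hrb, ha, hb⟩ := hin x hx d hd
    refine ⟨p.concat hadj.symm, hp.concat (fun h ↦ hy (hsupp y h)) hadj.symm, ?_,
      (Walk.isRainbow_concat_iff p hadj.symm).2 ⟨hrb, hcd ▸ hb⟩, ?_⟩
    · simp only [Walk.support_concat, List.mem_append, List.mem_singleton]
      exact fun z hz ↦ hz.imp (hsupp z) id
    · rw [Walk.edges_concat, List.concat_eq_append, List.map_append, List.mem_append, not_or]
      exact ⟨ha, by simpa [hcd] using hab⟩
  by_cases hu : u ∈ D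
  · obtain ⟨p, hp, -, hrb, -⟩ := fromD u hu v
    exact ⟨p, hp, hrb⟩
  by_cases huv : u = v
  · subst huv
    exact ⟨.nil, .nil, List.nodup_nil⟩
  obtain ⟨d, hd, -, -, hadj, -, hcd, -⟩ := hout u hu
  obtain ⟨p, hp, hsupp, hrb, ha⟩ := fromD d hd v
  have hup : u ∉ p.support := fun h ↦ (hsupp u h).elim hu huv
  exact ⟨.cons hadj p, hp.cons hup, (Walk.isRainbow_cons_iff hadj p).2 ⟨hcd ▸ ha, hrb⟩⟩

theorem exists_coloring_isPath_isRainbow_of_two_adj {D : Set V} {τ : Sym2 V → α} {a b : α}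
    (hab : a ≠ b)
    (hin : ∀ x ∈ D, ∀ y ∈ D, ∃ p : G.Walk x y, p.IsPath ∧ (∀ z ∈ p.support, z ∈ D) ∧
      p.IsRainbow τ ∧ a ∉ p.edges.map τ ∧ b ∉ p.edges.map τ)
    (hdom : ∀ v ∉ D, ∃ d₁ ∈ D, ∃ d₂ ∈ D, d₁ ≠ d₂ ∧ G.Adj v d₁ ∧ G.Adj v d₂) :
    ∃ c : Sym2 V → α, ∀ u v, ∃ p : G.Walk u v, p.IsPath ∧ p.IsRainbow c := by
  classical
  choose! f₁ hf₁ f₂ hf₂ hne hadj₁ hadj₂ using hdom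
  let c (e : Sym2 V) : α :=
    if ∃ v ∉ D, e = s(v, f₁ v) then a else if ∃ v ∈ e, v ∉ D then b else τ e
  have hcτ (e : Sym2 V) (he : ∀ x ∈ e, x ∈ D) : c e = τ e := by
    have h₁ : ¬∃ v ∉ D, e = s(v, f₁ v) := by
      rintro ⟨v, hv, rfl⟩
      exact hv (he v (Sym2.mem_mk_left _ _))
    have h₂ : ¬∃ v ∈ e, v ∉ D := fun ⟨v, hve, hv⟩ ↦ hv (he v hve)
    simp only [c, if_neg h₁, if_neg h₂]
  have hin' (x : V) (hx : x ∈ D) (y : V) (hy : y ∈ D) : ∃ p : G.Walk x y, p.IsPath ∧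
      (∀ z ∈ p.support, z ∈ D) ∧ p.IsRainbow c ∧ a ∉ p.edges.map c ∧ b ∉ p.edges.map c := by
    obtain ⟨p, hp, hsupp, h⟩ := hin x hx y hy
    have hcolors : p.edges.map c = p.edges.map τ := List.map_congr_left fun e he ↦
      hcτ e fun z hz ↦ hsupp z (Walk.mem_support_of_mem_edges he hz)
    exact ⟨p, hp, hsupp, by rwa [Walk.IsRainbow, hcolors]⟩
  have hout (v : V) (hv : v ∉ D) : ∃ d₁ ∈ D, ∃ d₂ ∈ D, G.Adj v d₁ ∧ G.Adj v d₂ ∧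
      c s(v, d₁) = a ∧ c s(v, d₂) = b := by
    have h₂ : ¬∃ w ∉ D, s(v, f₂ v) = s(w, f₁ w) := by
      rintro ⟨w, hw, h⟩
      rcases Sym2.eq_iff.1 h with ⟨rfl, h⟩ | ⟨rfl, -⟩
      exacts [hne v hv h.symm, hv (hf₁ w hw)]
    refine ⟨f₁ v, hf₁ v hv, f₂ v, hf₂ v hv, hadj₁ v hv, hadj₂ v hv, if_pos ⟨v, hv, rfl⟩, ?_⟩
    simp only [c, if_neg h₂]
    exact if_pos ⟨v, Sym2.mem_mk_left _ _, hv⟩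
  exact ⟨c, exists_isPath_isRainbow_of_two_colored_adj hab hin' hout⟩

end SimpleGraph

theorem rc_le_card_dominating_add_one_general {V : Type*} (G : SimpleGraph V)
    (D : Finset V)
    (hDconn : (G.induce (↑D : Set V)).Connected)
    (hdom : ∀ v : V, v ∉ D →
      ∃ d₁ ∈ D, ∃ d₂ ∈ D, d₁ ≠ d₂ ∧ G.Adj v d₁ ∧ G.Adj v d₂) :
    ∃ c : Sym2 V → Fin (D.card + 1), IsRainbowConnected G c := by
  obtain ⟨r⟩ := hDconn.nonempty
  obtain ⟨τ, hτ⟩ := hDconn.exists_isPath_isRainbow_of_induce r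
  obtain ⟨c, hc⟩ := exists_coloring_isPath_isRainbow_of_two_adj (τ := some ∘ τ)
    (Option.some_ne_none r)
    (fun x hx y hy ↦ (hτ x hx y hy).imp fun p ⟨hp, hsupp, hrb, hr⟩ ↦
      ⟨hp, hsupp, hrb.comp (Option.some_injective _), by simpa [← List.map_map] using hr,
        by simp⟩) hdom
  let e : Option (↑D : Set V) ≃ Fin (D.card + 1) := Fintype.equivFinOfCardEq (by simp)
  exact ⟨e ∘ c, fun u v ↦ (hc u v).imp fun p ⟨hp, hrb⟩ ↦ ⟨hp, hrb.comp e.injective⟩⟩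

/-- If `D` induces a connected subgraph of the finite connected graph `G` and every vertex
outside `D` has at least two neighbors in `D`, then `rc(G) ≤ |D| + 1`: there is an edge
coloring with at most `|D| + 1` colors making `G` rainbow-connected. -/
theorem rc_le_card_dominating_add_one {V : Type*} [Fintype V] (G : SimpleGraph V)
    (hG : G.Connected) (D : Finset V)
    (hDconn : (G.induce (↑D : Set V)).Connected)
    (hdom : ∀ v : V, v ∉ D →
      ∃ d₁ ∈ D, ∃ d₂ ∈ D, d₁ ≠ d₂ ∧ G.Adj v d₁ ∧ G.Adj v d₂) :
    ∃ c : Sym2 V → Fin (D.card + 1), IsRainbowConnected G c :=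
  rc_le_card_dominating_add_one_general G D hDconn hdom
end

section
/- Let G be a finite connected simple graph and let F ⊆ V(G) be the vertex set of a maximum induced forest of G. Then there exists a vertex set A ⊆ V(G) \ F of size at most 2|F| − 2 such that the induced subgraph G[F ∪ A] is connected. -/
/-!
By maximality `F` dominates `G`: a vertex without neighbours in `F` could be added to the forest.
Let `X` be connected and miss a vertex of `F`, and let `K` be `X` together with its neighbours
outside `F`. A path from `X` to the missing vertex leaves `K` along an edge `uw`; then `w`, or an
`F`-neighbour of `w` when `w ∉ F`, is a new vertex of `F` joined to `X` through at most two
further vertices. Starting from one vertex of `F`, `|F| - 1` such steps connect all of `F`.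
-/

open SimpleGraph Finset

namespace SimpleGraph

variable {V : Type*} {G : SimpleGraph V}

lemma Walk.IsCycle.induce {s : Set V} {u : V} {c : G.Walk u u} (hc : c.IsCycle)
    (hs : ∀ x ∈ c.support, x ∈ s) : (c.induce s hs).IsCycle := by
  rwa [← Walk.isCycle_map_iff_of_injective (f := (Embedding.induce s).toHom) Subtype.val_injective,
    Walk.map_induce]

lemma Walk.IsCycle.exists_adj_mem_support {u v : V} {c : G.Walk u u} (hc : c.IsCycle)
    (hv : v ∈ c.support) : ∃ w ∈ c.support, G.Adj v w := by
  classical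
  exact ⟨_, (c.mem_support_rotate_iff v hv).1 (Walk.getVert_mem_support _ 1),
      Walk.adj_snd (hc.rotate hv).not_nil⟩

lemma isAcyclic_induce_insert {s : Set V} {v : V} (hs : (G.induce s).IsAcyclic)
    (hv : ∀ w ∈ s, ¬ G.Adj v w) : (G.induce (insert v s)).IsAcyclic := by
  rintro ⟨u, hu⟩ c hc
  set c' := c.map (Embedding.induce (insert v s)).toHom
  have hc' : c'.IsCycle := hc.map Subtype.val_injective
  have hc's : ∀ x ∈ c'.support, x ∈ insert v s := by
    simp only [c', Walk.support_map, List.mem_map]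
    rintro _ ⟨x, -, rfl⟩
    exact x.2
  have hvc : v ∉ c'.support := fun hv' => by
    obtain ⟨w, hw, hvw⟩ := hc'.exists_adj_mem_support hv'
    exact hv w ((hc's w hw).resolve_left hvw.ne') hvw
  have hc's' : ∀ x ∈ c'.support, x ∈ s := fun x hx =>
    (hc's x hx).resolve_left (by rintro rfl; exact hvc hx)
  exact hs _ (hc'.induce hc's')

lemma Connected.induce_insert {s : Set V} {u v : V} (hs : (G.induce s).Connected) (hu : u ∈ s)
    (huv : G.Adj u v) : (G.induce (insert v s)).Connected := by
  rw [Set.insert_eq, Set.union_comm]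
  exact connected_induce_union hs.preconnected (by simp) hu rfl huv

variable [DecidableEq V] {F : Finset V}

lemma exists_adj_of_forall_isAcyclic_card_le (hF : (G.induce (↑F : Set V)).IsAcyclic)
    (hmax : ∀ S : Finset V, (G.induce (↑S : Set V)).IsAcyclic → #S ≤ #F) {v : V} (hv : v ∉ F) :
    ∃ f ∈ F, G.Adj v f := by
  by_contra! h
  have := hmax (insert v F) (by rw [coe_insert]; exact isAcyclic_induce_insert hF h)
  rw [card_insert_of_notMem hv] at this
  omega

lemma exists_connected_insert_union (hG : G.Preconnected)
    (hdom : ∀ v ∉ F, ∃ f ∈ F, G.Adj v f) {X : Finset V} (hX : (G.induce (↑X : Set V)).Connected)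
    {f : V} (hf : f ∈ F) (hfX : f ∉ X) :
    ∃ g ∈ F, g ∉ X ∧ ∃ N : Finset V, #N ≤ 2 ∧
      (G.induce (↑(insert g (X ∪ N)) : Set V)).Connected := by
  obtain ⟨⟨x, hx⟩⟩ := hX.nonempty
  set K : Set V := ↑X ∪ {w | w ∉ F ∧ ∃ c ∈ X, G.Adj c w}
  obtain ⟨p⟩ := hG x f
  obtain ⟨⟨⟨u, w⟩, huw⟩, -, huK, hwK⟩ :=
    p.exists_boundary_dart K (Or.inl hx) (by simp [K, hf, hfX])
  dsimp only at huw
  simp only [K, Set.mem_union, Finset.mem_coe, Set.mem_ofPred_eq, not_or, not_and, not_exists]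
    at huK hwK
  obtain ⟨hwX, hwK⟩ := hwK
  rcases huK with huX | ⟨huF, c, hcX, hcu⟩
  · have hwF : w ∈ F := by_contra fun hwF => hwK hwF u huX huw
    refine ⟨w, hwF, hwX, ∅, by simp, ?_⟩
    rw [union_empty, coe_insert]
    exact hX.induce_insert huX huw
  have hXu : (G.induce (insert u ↑X)).Connected := hX.induce_insert hcX hcu
  by_cases hwF : w ∈ F
  · refine ⟨w, hwF, hwX, {u}, by simp, ?_⟩
    rw [show (↑(insert w (X ∪ {u})) : Set V) = insert w (insert u ↑X) by ext; simp]
    exact hXu.induce_insert (Set.mem_insert u _) huw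
  · obtain ⟨g, hg, hwg⟩ := hdom w hwF
    have hgX : g ∉ X := fun hgX => hwK hwF g hgX hwg.symm
    refine ⟨g, hg, hgX, {u, w}, card_le_two, ?_⟩
    rw [show (↑(insert g (X ∪ {u, w})) : Set V) = insert g (insert w (insert u ↑X)) by
      ext; simp; tauto]
    exact (hXu.induce_insert (Set.mem_insert u _) huw).induce_insert (Set.mem_insert w _) hwg

theorem exists_connected_superset_card_sdiff_le (hG : G.Preconnected)
    (hdom : ∀ v ∉ F, ∃ f ∈ F, G.Adj v f) (X : Finset V)
    (hX : (G.induce (↑X : Set V)).Connected) :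
    ∃ Y : Finset V, F ⊆ Y ∧ (G.induce (↑Y : Set V)).Connected ∧
      #(Y \ F) ≤ #(X \ F) + 2 * #(F \ X) := by
  by_cases hFX : F ⊆ X
  · exact ⟨X, hFX, hX, by omega⟩
  obtain ⟨f, hf, hfX⟩ := not_subset.1 hFX
  obtain ⟨g, hg, hgX, N, hN, hY⟩ := exists_connected_insert_union hG hdom hX hf hfX
  have hXY : X ⊆ insert g (X ∪ N) := subset_union_left.trans (subset_insert _ _)
  have hdecr : #(F \ insert g (X ∪ N)) < #(F \ X) := by
    refine card_lt_card (ssubset_iff_of_subset (sdiff_subset_sdiff subset_rfl hXY) |>.2 ?_)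
    exact ⟨g, mem_sdiff.2 ⟨hg, hgX⟩, by simp⟩
  have hgrow : #(insert g (X ∪ N) \ F) ≤ #(X \ F) + 2 := calc
    #(insert g (X ∪ N) \ F) ≤ #(X \ F ∪ N) := card_le_card fun a => by
      simp only [mem_sdiff, mem_insert, mem_union]
      rintro ⟨rfl | ha | ha, haF⟩
      exacts [absurd hg haF, Or.inl ⟨ha, haF⟩, Or.inr ha]
    _ ≤ #(X \ F) + 2 := (card_union_le _ _).trans (by omega)
  obtain ⟨Z, hFZ, hZ, hcard⟩ := exists_connected_superset_card_sdiff_le hG hdom _ hY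
  exact ⟨Z, hFZ, hZ, by omega⟩
termination_by #(F \ X)

end SimpleGraph

theorem exists_connector_card_le_general {V : Type*} [DecidableEq V] (G : SimpleGraph V)
    (hG : G.Connected) (F : Finset V)
    (hF : (G.induce (↑F : Set V)).IsAcyclic)
    (hmax : ∀ S : Finset V, (G.induce (↑S : Set V)).IsAcyclic → S.card ≤ F.card) :
    ∃ A : Finset V, (∀ a ∈ A, a ∉ F) ∧ A.card ≤ 2 * F.card - 2 ∧
      (G.induce (↑(F ∪ A) : Set V)).Connected := by
  obtain ⟨v⟩ := hG.nonempty
  obtain ⟨x, hx⟩ : F.Nonempty := by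
    simpa using hmax {v} (by rw [coe_singleton]; exact IsAcyclic.of_subsingleton)
  obtain ⟨Y, hFY, hY, hcard⟩ :=
    exists_connected_superset_card_sdiff_le hG.preconnected
      (fun _ hv => exists_adj_of_forall_isAcyclic_card_le hF hmax hv) {x}
      (by rw [coe_singleton, induce_singleton_eq_top]; exact connected_top)
  refine ⟨Y \ F, fun a ha => (mem_sdiff.1 ha).2, ?_, by rwa [union_sdiff_of_subset hFY]⟩
  rw [sdiff_singleton_eq_erase, card_erase_of_mem hx, sdiff_eq_empty_iff_subset.2
    (singleton_subset_iff.2 hx), card_empty] at hcard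
  omega

/-- If `F` is the vertex set of a maximum induced forest of a finite connected graph `G`, then
there is a set `A` of at most `2|F| - 2` vertices outside `F` such that `G[F ∪ A]` is
connected. -/
theorem exists_connector_card_le {V : Type*} [Fintype V] [DecidableEq V] (G : SimpleGraph V)
    (hG : G.Connected) (F : Finset V)
    (hF : (G.induce (↑F : Set V)).IsAcyclic)
    (hmax : ∀ S : Finset V, (G.induce (↑S : Set V)).IsAcyclic → S.card ≤ F.card) :
    ∃ A : Finset V, (∀ a ∈ A, a ∉ F) ∧ A.card ≤ 2 * F.card - 2 ∧
      (G.induce (↑(F ∪ A) : Set V)).Connected :=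
  exists_connector_card_le_general G hG F hF hmax
end

section
/- For every integer k ≥ 3, let G_k be the graph obtained from the complete graph K_k by attaching to each of its k vertices a new pendant vertex (a vertex of degree one adjacent only to that vertex). Then the rainbow connection number of G_k equals k. -/
open SimpleGraph

/-- The rainbow connection number: the least number of colors of an edge coloring making the
graph rainbow-connected. -/
noncomputable def rcNum {V : Type*} (G : SimpleGraph V) : ℕ :=
  sInf {n : ℕ | ∃ c : Sym2 V → Fin n, IsRainbowConnected G c}

/-- The graph obtained from the complete graph `K_k` (on vertices `Sum.inl i`) by attaching a
pendant vertex `Sum.inr i` to each vertex `Sum.inl i`. -/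
def pendantComplete (k : ℕ) : SimpleGraph (Fin k ⊕ Fin k) where
  Adj x y :=
    (∃ i j : Fin k, i ≠ j ∧ x = Sum.inl i ∧ y = Sum.inl j) ∨
    (∃ i : Fin k, x = Sum.inl i ∧ y = Sum.inr i) ∨
    (∃ i : Fin k, x = Sum.inr i ∧ y = Sum.inl i)
  symm := by
    constructor
    rintro x y (⟨i, j, hij, rfl, rfl⟩ | ⟨i, rfl, rfl⟩ | ⟨i, rfl, rfl⟩)
    · exact Or.inl ⟨j, i, hij.symm, rfl, rfl⟩
    · exact Or.inr (Or.inr ⟨i, rfl, rfl⟩)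
    · exact Or.inr (Or.inl ⟨i, rfl, rfl⟩)
  loopless := by
    constructor
    rintro x (⟨i, j, hij, rfl, h⟩ | ⟨i, rfl, h⟩ | ⟨i, rfl, h⟩)
    · exact hij (Sum.inl.inj h.symm).symm
    · exact Sum.inl_ne_inr h
    · exact Sum.inr_ne_inl h

/-!
Any path between two pendant vertices uses both of their pendant edges, so a rainbow coloring
gives the `k` pendant edges `k` distinct colors. Conversely, with `k` colors give the pendant edge
at `i` color `i` and each clique edge `ij` a third color (possible as `k ≥ 3`); then
`inr i, inl i, inl j, inr j` is a rainbow path.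
-/

theorem Sym2.exists_notMem_of_three_le {α : Type*} (h : 3 ≤ ENat.card α) (z : Sym2 α) :
    ∃ a, a ∉ z := by
  induction z using Sym2.ind with
  | h x y => simpa [not_or] using ENat.exists_ne_ne_of_three_le h x y

namespace SimpleGraph

variable {V : Type*} {G : SimpleGraph V}

theorem Walk.mem_edges_of_neighborSet_eq_singleton {x y v : V} (hx : G.neighborSet x = {y})
    (p : G.Walk x v) (hv : x ≠ v) : s(x, y) ∈ p.edges := by
  cases p with
  | nil => exact absurd rfl hv
  | cons h q =>
    obtain rfl : _ = y := by simpa [hx] using (G.mem_neighborSet _ _).2 h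
    simp

theorem exists_rainbow_path_symm {α : Type*} {c : Sym2 V → α} {u v : V}
    (h : ∃ p : G.Walk u v, p.IsPath ∧ (p.edges.map c).Nodup) :
    ∃ p : G.Walk v u, p.IsPath ∧ (p.edges.map c).Nodup := by
  obtain ⟨p, hp, hc⟩ := h
  exact ⟨p.reverse, hp.reverse, by simpa [Walk.edges_reverse] using hc⟩

end SimpleGraph

section Pendant

variable {V ι : Type*} {G : SimpleGraph V} {n : ℕ} {c : Sym2 V → Fin n} {f g : ι → V}

theorem IsRainbowConnected.injective_color_pendant (hc : IsRainbowConnected G c)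
    (hpend : ∀ i, G.neighborSet (f i) = {g i}) (hinj : Function.Injective fun i ↦ s(f i, g i)) :
    Function.Injective fun i ↦ c s(f i, g i) := by
  intro i j hij
  apply hinj
  by_cases hf : f i = f j
  · have hg : g i = g j := by simpa [hpend, hf] using (hpend i).symm
    simp [hf, hg]
  obtain ⟨p, -, hp⟩ := hc (f i) (f j)
  have hi := p.mem_edges_of_neighborSet_eq_singleton (hpend i) hf
  have hj := p.reverse.mem_edges_of_neighborSet_eq_singleton (hpend j) (Ne.symm hf)
  rw [Walk.edges_reverse, List.mem_reverse] at hj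
  exact List.inj_on_of_nodup_map hp hi hj hij

theorem IsRainbowConnected.card_le_of_pendant [Fintype ι] (hc : IsRainbowConnected G c)
    (hpend : ∀ i, G.neighborSet (f i) = {g i}) (hinj : Function.Injective fun i ↦ s(f i, g i)) :
    Fintype.card ι ≤ n := by
  simpa using Fintype.card_le_of_injective _ (hc.injective_color_pendant hpend hinj)

end Pendant

namespace pendantComplete

variable {k : ℕ}

theorem adj_inl_inl {i j : Fin k} (h : i ≠ j) : (pendantComplete k).Adj (.inl i) (.inl j) :=
  Or.inl ⟨i, j, h, rfl, rfl⟩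

theorem adj_inl_inr (i : Fin k) : (pendantComplete k).Adj (.inl i) (.inr i) :=
  Or.inr (Or.inl ⟨i, rfl, rfl⟩)

theorem neighborSet_inr (i : Fin k) : (pendantComplete k).neighborSet (.inr i) = {.inl i} := by
  ext v
  simp [pendantComplete, eq_comm]

theorem exists_notMem_sym2 (hk : 3 ≤ k) (z : Sym2 (Fin k)) : ∃ l, l ∉ z :=
  Sym2.exists_notMem_of_three_le (by simpa using hk) z

/-- Pendant edge `{inl i, inr i}` gets color `i`; a clique edge (and, as junk, a pair of pendant
vertices) gets a color avoiding both of its endpoints. -/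
noncomputable def rainbowColoring (hk : 3 ≤ k) : Sym2 (Fin k ⊕ Fin k) → Fin k :=
  Sym2.lift ⟨fun
    | .inl i, .inl j => (exists_notMem_sym2 hk s(i, j)).choose
    | .inl _, .inr j => j
    | .inr i, .inl _ => i
    | .inr i, .inr j => (exists_notMem_sym2 hk s(i, j)).choose,
    by rintro (i | i) (j | j) <;> simp [Sym2.eq_swap]⟩

variable (hk : 3 ≤ k)

theorem rainbowColoring_inl_inl_notMem (i j : Fin k) :
    rainbowColoring hk s(.inl i, .inl j) ∉ s(i, j) :=
  (exists_notMem_sym2 hk s(i, j)).choose_spec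

@[simp]
theorem rainbowColoring_inl_inr (i j : Fin k) : rainbowColoring hk s(.inl i, .inr j) = j := rfl

@[simp]
theorem rainbowColoring_inr_inl (i j : Fin k) : rainbowColoring hk s(.inr i, .inl j) = i := rfl

theorem isRainbowConnected_rainbowColoring :
    IsRainbowConnected (pendantComplete k) (rainbowColoring hk) := by
  have hne : ∀ i j : Fin k, rainbowColoring hk s(.inl i, .inl j) ≠ i ∧
      rainbowColoring hk s(.inl i, .inl j) ≠ j := by
    simpa [not_or] using rainbowColoring_inl_inl_notMem hk
  have inl_inl (i j : Fin k) : ∃ p : (pendantComplete k).Walk (.inl i) (.inl j),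
      p.IsPath ∧ (p.edges.map (rainbowColoring hk)).Nodup := by
    by_cases hij : i = j
    · subst hij; exact ⟨.nil, by simp, by simp⟩
    · exact ⟨.cons (adj_inl_inl hij) .nil, by simp [hij], by simp⟩
  have inl_inr (i j : Fin k) : ∃ p : (pendantComplete k).Walk (.inl i) (.inr j),
      p.IsPath ∧ (p.edges.map (rainbowColoring hk)).Nodup := by
    by_cases hij : i = j
    · subst hij; exact ⟨.cons (adj_inl_inr i) .nil, by simp, by simp⟩
    · exact ⟨.cons (adj_inl_inl hij) (.cons (adj_inl_inr j) .nil), by simp [hij],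
        by simp [(hne i j).2]⟩
  rintro (i | i) (j | j)
  · exact inl_inl i j
  · exact inl_inr i j
  · exact exists_rainbow_path_symm (inl_inr j i)
  · by_cases hij : i = j
    · subst hij; exact ⟨.nil, by simp, by simp⟩
    · exact ⟨.cons (adj_inl_inr i).symm (.cons (adj_inl_inl hij) (.cons (adj_inl_inr j) .nil)),
        by simp [hij], by simp [hij, hne, Ne.symm (hne i j).1]⟩

end pendantComplete

/-- For every `k ≥ 3`, the rainbow connection number of the complete graph `K_k` with a pendant
vertex attached to each of its vertices is exactly `k`. -/
theorem rcNum_pendantComplete (k : ℕ) (hk : 3 ≤ k) :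
    rcNum (pendantComplete k) = k := by
  have hk_mem : k ∈ {n : ℕ | ∃ c : Sym2 (Fin k ⊕ Fin k) → Fin n,
      IsRainbowConnected (pendantComplete k) c} :=
    ⟨_, pendantComplete.isRainbowConnected_rainbowColoring hk⟩
  refine le_antisymm (Nat.sInf_le hk_mem) (le_csInf ⟨k, hk_mem⟩ ?_)
  rintro n ⟨c, hc⟩
  have hpendant_edges : Function.Injective fun i : Fin k ↦ s(Sum.inr i, Sum.inl i) := by
    intro i j h
    simpa using h
  simpa using hc.card_le_of_pendant pendantComplete.neighborSet_inr hpendant_edges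
end
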